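/- arXiv:1811.12594 — 5 statements merged into one kernel-verified Lean document; each statement's English description precedes it below -/
import Mathlib

section
/- The curve t ↦ H_t is differentiable with H_t' = −2 L_t H_t for all t, and h is differentiable with h'(t) = −g_t(L_t H_t, H_t) for all t. -/
open Matrix

private lemma det_diffAt {n : ℕ} {M : ℝ → Matrix (Fin n) (Fin n) ℝ} {t : ℝ}
    (hM : ∀ i j, DifferentiableAt ℝ (fun s => M s i j) t) :
    DifferentiableAt ℝ (fun s => (M s).det) t := by
  simp only [Matrix.det_apply']
  exact DifferentiableAt.fun_sum fun σ _ =>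
    (DifferentiableAt.fun_finsetProd (fun i _ => hM (σ i) i)).const_mul _

private lemma adj_diffAt {n : ℕ} {M : ℝ → Matrix (Fin n) (Fin n) ℝ} {t : ℝ}
    (hM : ∀ i j, DifferentiableAt ℝ (fun s => M s i j) t) (i j : Fin n) :
    DifferentiableAt ℝ (fun s => (M s).adjugate i j) t := by
  simp only [Matrix.adjugate_apply]
  apply det_diffAt
  intro k l
  by_cases hk : k = j
  · simp [Matrix.updateRow_apply, hk]
  · simp only [Matrix.updateRow_apply, hk, if_false]
    exact hM k l

/-- For a smooth curve `g_t` of inner products on a finite-dimensional real vector space `V`,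
with `L_t` the `g_t`-symmetric endomorphisms satisfying `(d/dt g_t)(X,Y) = 2 g_t(L_t X, Y)`,
`φ` a fixed linear functional, `H_t` the `g_t`-dual of `φ` and `h(t) = (1/2) g_t(H_t, H_t)`:
the curve `t ↦ H_t` is differentiable with `H_t' = −2 L_t H_t`, and `h` is differentiable
with `h'(t) = −g_t(L_t H_t, H_t)`. -/
theorem meanCurvature_evolution
    (V : Type*) [NormedAddCommGroup V] [NormedSpace ℝ V] [FiniteDimensional ℝ V]
    -- the smooth curve of inner products
    (g : ℝ → V →ₗ[ℝ] V →ₗ[ℝ] ℝ)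
    (hg_symm : ∀ (t : ℝ) (X Y : V), g t X Y = g t Y X)
    (hg_pos : ∀ (t : ℝ) (X : V), X ≠ 0 → 0 < g t X X)
    (hg_smooth : ∀ X Y : V, ContDiff ℝ (⊤ : ℕ∞) fun t => g t X Y)
    -- the `g_t`-symmetric endomorphisms `L_t` with `g_t' = 2 g_t(L_t ·, ·)`
    (L : ℝ → V →ₗ[ℝ] V)
    (hL_symm : ∀ (t : ℝ) (X Y : V), g t (L t X) Y = g t X (L t Y))
    (hL_deriv : ∀ (t : ℝ) (X Y : V),
      HasDerivAt (fun s => g s X Y) (2 * g t (L t X) Y) t)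
    -- the fixed linear functional `φ` and its `g_t`-duals `H_t`
    (φ : V →ₗ[ℝ] ℝ)
    (H : ℝ → V) (hH : ∀ (t : ℝ) (X : V), g t (H t) X = φ X)
    (h : ℝ → ℝ) (hh : ∀ t : ℝ, h t = (1/2) * g t (H t) (H t)) :
    (∀ t : ℝ, HasDerivAt H ((-2 : ℝ) • L t (H t)) t) ∧
    (∀ t : ℝ, HasDerivAt h (-(g t (L t (H t)) (H t))) t) := by
  classical
  set n := Module.finrank ℝ V with hn
  let e : Module.Basis (Fin n) ℝ V := Module.finBasis ℝ V
  set A : ℝ → Matrix (Fin n) (Fin n) ℝ := fun s => Matrix.of fun i j => g s (e i) (e j) with hA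
  set b : Fin n → ℝ := fun i => φ (e i) with hb
  -- expansion of a vector over the basis
  have hexp : ∀ x : V, x = ∑ j, e.equivFun x j • e j := by
    intro x
    conv_lhs => rw [← e.equivFun.symm_apply_apply x]
    rw [Module.Basis.equivFun_symm_apply]
  -- mulVec formula
  have hmul : ∀ (s : ℝ) (x : V) (i : Fin n), (A s *ᵥ e.equivFun x) i = g s (e i) x := by
    intro s x i
    calc (A s *ᵥ e.equivFun x) i = ∑ j, g s (e i) (e j) * e.equivFun x j := by
          simp [Matrix.mulVec, dotProduct, hA]
    _ = g s (e i) (∑ j, e.equivFun x j • e j) := by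
          rw [map_sum]
          refine Finset.sum_congr rfl fun j _ => ?_
          rw [LinearMap.map_smul, smul_eq_mul, mul_comm]
    _ = g s (e i) x := by rw [← hexp x]
  -- invertibility of A s
  have hA_unit : ∀ s, IsUnit (A s) := by
    intro s
    rw [← Matrix.mulVec_injective_iff_isUnit]
    intro v w hvw
    have key : ∀ u : Fin n → ℝ, A s *ᵥ u = 0 → u = 0 := by
      intro u hu
      set x := e.equivFun.symm u with hx
      have hux : e.equivFun x = u := e.equivFun.apply_symm_apply u
      have h0 : ∀ i, g s (e i) x = 0 := by
        intro i
        rw [← hmul s x i, hux, hu]; rfl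
      have hxx : g s x x = 0 := by
        nth_rewrite 2 [hexp x]
        rw [map_sum]
        refine Finset.sum_eq_zero fun j _ => ?_
        rw [LinearMap.map_smul, smul_eq_mul, hg_symm s x (e j), h0 j, mul_zero]
      have hx0 : x = 0 := by
        by_contra hne
        exact absurd hxx (ne_of_gt (hg_pos s x hne))
      rw [← hux, hx0, map_zero]
    have := key (v - w) (by rw [Matrix.mulVec_sub, hvw, sub_self])
    exact sub_eq_zero.mp this
  have hA_inj : ∀ s, Function.Injective (A s).mulVec :=
    fun s => Matrix.mulVec_injective_iff_isUnit.mpr (hA_unit s)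
  have hdet : ∀ s, IsUnit (A s).det := fun s => (Matrix.isUnit_iff_isUnit_det _).1 (hA_unit s)
  -- A s *ᵥ (coords of H s) = b
  have hAd : ∀ s, A s *ᵥ e.equivFun (H s) = b := by
    intro s; funext i
    rw [hmul s (H s) i, hg_symm, hH s (e i)]
  -- closed form for the coordinates
  have hd_eq : ∀ s, e.equivFun (H s) = (A s)⁻¹ *ᵥ b := by
    intro s
    have := congrArg (fun v => (A s)⁻¹ *ᵥ v) (hAd s)
    simpa [Matrix.mulVec_mulVec, Matrix.nonsing_inv_mul _ (hdet s)] using this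
  -- differentiability of the entries of A
  have hAent : ∀ (t : ℝ) (i j : Fin n), DifferentiableAt ℝ (fun s => A s i j) t :=
    fun t i j => (hL_deriv t (e i) (e j)).differentiableAt
  -- part 1
  have part1 : ∀ t : ℝ, HasDerivAt H ((-2 : ℝ) • L t (H t)) t := by
    intro t
    have hd_diff : ∀ i, DifferentiableAt ℝ (fun s => e.equivFun (H s) i) t := by
      intro i
      have heq : (fun s => e.equivFun (H s) i)
          = fun s => ((A s).det)⁻¹ * ∑ j, (A s).adjugate i j * b j := by
        funext s
        rw [hd_eq s, Matrix.inv_def]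
        simp [Matrix.mulVec, dotProduct, Finset.mul_sum, mul_assoc]
      rw [heq]
      exact ((det_diffAt (hAent t)).inv (hdet t).ne_zero).mul
        (DifferentiableAt.fun_sum fun j _ => (adj_diffAt (hAent t) i j).mul_const _)
    set d : Fin n → ℝ := e.equivFun (H t) with hdd
    set d' : Fin n → ℝ := fun i => deriv (fun s => e.equivFun (H s) i) t with hd'def
    have hd' : ∀ i, HasDerivAt (fun s => e.equivFun (H s) i) (d' i) t :=
      fun i => (hd_diff i).hasDerivAt
    -- implicit differentiation of A s *ᵥ d s = b
    have hconstraint : ∀ i, (∑ j, (2 * g t (L t (e i)) (e j) * d j + A t i j * d' j)) = 0 := by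
      intro i
      have h1 : HasDerivAt (fun s => ∑ j, A s i j * e.equivFun (H s) j)
          (∑ j, (2 * g t (L t (e i)) (e j) * d j + A t i j * d' j)) t :=
        HasDerivAt.fun_sum fun j _ => (hL_deriv t (e i) (e j)).mul (hd' j)
      have h2 : (fun s => ∑ j, A s i j * e.equivFun (H s) j) = fun _ => b i := by
        funext s
        have := congrFun (hAd s) i
        simpa [Matrix.mulVec, dotProduct] using this
      rw [h2] at h1
      exact h1.unique (hasDerivAt_const t (b i))
    -- identify d' with the coordinates of -2 L t (H t)
    have hcoord : e.equivFun ((-2 : ℝ) • L t (H t)) = d' := by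
      apply hA_inj t
      funext i
      rw [hmul t ((-2 : ℝ) • L t (H t)) i]
      have hLH : g t (e i) ((-2 : ℝ) • L t (H t)) = -2 * g t (L t (e i)) (H t) := by
        rw [LinearMap.map_smul, smul_eq_mul]
        congr 1
        rw [hg_symm t (e i) (L t (H t)), hL_symm t (H t) (e i), hg_symm t (H t) (L t (e i))]
      have hsum : ∑ j, 2 * g t (L t (e i)) (e j) * d j = 2 * g t (L t (e i)) (H t) := by
        conv_rhs => rw [hexp (H t)]
        rw [map_sum, Finset.mul_sum]
        refine Finset.sum_congr rfl fun j _ => ?_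
        rw [LinearMap.map_smul, smul_eq_mul]
        ring
      have hAv : (A t *ᵥ d') i = ∑ j, A t i j * d' j := by
        simp [Matrix.mulVec, dotProduct]
      rw [hLH, hAv]
      have := hconstraint i
      rw [Finset.sum_add_distrib] at this
      have h3 : ∑ j, A t i j * d' j = -(∑ j, 2 * g t (L t (e i)) (e j) * d j) := by
        linarith
      rw [h3, hsum]; ring
    -- conclude
    have hpi : HasDerivAt (fun s => e.equivFun (H s)) d' t := hasDerivAt_pi.2 hd'
    let E : (Fin n → ℝ) →L[ℝ] V :=
      LinearMap.toContinuousLinearMap (e.equivFun.symm : (Fin n → ℝ) →ₗ[ℝ] V)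
    have hcomp : HasDerivAt (fun s => E (e.equivFun (H s))) (E d') t :=
      E.hasFDerivAt.comp_hasDerivAt t hpi
    have hEfun : (fun s => E (e.equivFun (H s))) = H := by
      funext s
      show e.equivFun.symm (e.equivFun (H s)) = H s
      exact e.equivFun.symm_apply_apply (H s)
    have hEd' : E d' = (-2 : ℝ) • L t (H t) := by
      show e.equivFun.symm d' = _
      rw [← hcoord]
      exact e.equivFun.symm_apply_apply _
    rw [hEfun, hEd'] at hcomp
    exact hcomp
  refine ⟨part1, fun t => ?_⟩
  -- part 2
  have hhfun : h = fun s => (1/2 : ℝ) * φ (H s) := by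
    funext s; rw [hh s, hH s (H s)]
  have hφ : HasDerivAt (fun s => φ (H s)) (φ ((-2 : ℝ) • L t (H t))) t :=
    (LinearMap.toContinuousLinearMap φ).hasFDerivAt.comp_hasDerivAt t (part1 t)
  have h2 : HasDerivAt h ((1/2 : ℝ) * φ ((-2 : ℝ) • L t (H t))) t := by
    rw [hhfun]
    exact hφ.const_mul _
  have hval : (1/2 : ℝ) * φ ((-2 : ℝ) • L t (H t)) = -(g t (L t (H t)) (H t)) := by
    have hphi : φ (L t (H t)) = g t (L t (H t)) (H t) := by
      rw [← hH t (L t (H t)), hg_symm t (H t) (L t (H t))]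
    rw [LinearMap.map_smul, smul_eq_mul, hphi]
    ring
  rw [← hval]
  exact h2
end

section
/- Suppose in addition that there is a family of endomorphisms R_t ∈ End(V) such that L_t' = −(tr L_t)·L_t + R_t + Id_V for all t (the Riccati equation satisfied by the shape operators of an orbit-Einstein cohomogeneity-one manifold with Einstein constant −1). Then h''(t) = 2 g_t(L_t H_t, L_t H_t) − (tr L_t)·h'(t) − 2 h(t) − g_t(R_t H_t, H_t) for all t. -/
open Finset

set_option linter.unusedSectionVars false
set_option synthInstance.maxHeartbeats 1000000
set_option maxHeartbeats 1000000

section Aux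

variable {V : Type*} [NormedAddCommGroup V] [NormedSpace ℝ V] [FiniteDimensional ℝ V]

lemma bilin_expand {ι : Type*} [Fintype ι] [DecidableEq ι] (b : Module.Basis ι ℝ V)
    (B : V →ₗ[ℝ] V →ₗ[ℝ] ℝ) :
    B = ∑ i : ι, ∑ j : ι, B (b i) (b j) • (b.coord i).smulRight (b.coord j) := by
  apply b.ext
  intro k
  apply b.ext
  intro l
  simp [LinearMap.sum_apply, LinearMap.smulRight_apply, Module.Basis.coord_apply, Module.Basis.repr_self,
    Finsupp.single_apply]

lemma hasDerivAt_comp_bilin {F : Type*} [NormedAddCommGroup F] [NormedSpace ℝ F]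
    {ι : Type*} [Fintype ι] [DecidableEq ι] (b : Module.Basis ι ℝ V)
    (g : ℝ → V →ₗ[ℝ] V →ₗ[ℝ] ℝ) (D : V →ₗ[ℝ] V →ₗ[ℝ] ℝ) (t : ℝ)
    (hd : ∀ X Y : V, HasDerivAt (fun s => g s X Y) (D X Y) t)
    (Φ : (V →ₗ[ℝ] V →ₗ[ℝ] ℝ) →ₗ[ℝ] F) :
    HasDerivAt (fun s => Φ (g s)) (Φ D) t := by
  have key : ∀ B : V →ₗ[ℝ] V →ₗ[ℝ] ℝ,
      Φ B = ∑ i : ι, ∑ j : ι, B (b i) (b j) • Φ ((b.coord i).smulRight (b.coord j)) := by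
    intro B
    conv_lhs => rw [bilin_expand b B]
    simp
  have hsum : HasDerivAt (fun s => ∑ i : ι, ∑ j : ι,
      g s (b i) (b j) • Φ ((b.coord i).smulRight (b.coord j)))
      (∑ i : ι, ∑ j : ι, D (b i) (b j) • Φ ((b.coord i).smulRight (b.coord j))) t := by
    apply HasDerivAt.fun_sum
    intro i _
    apply HasDerivAt.fun_sum
    intro j _
    exact (hd (b i) (b j)).smul_const _
  have hfun : (fun s => Φ (g s)) = fun s => ∑ i : ι, ∑ j : ι,
      g s (b i) (b j) • Φ ((b.coord i).smulRight (b.coord j)) := funext fun s => key (g s)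
  rw [hfun, key D]
  exact hsum

lemma hasDerivAt_endoCLM (L : ℝ → V →ₗ[ℝ] V) (L' : V →ₗ[ℝ] V) (t : ℝ)
    (hL : ∀ X : V, HasDerivAt (fun s => L s X) (L' X) t) :
    HasDerivAt (fun s => LinearMap.toContinuousLinearMap (L s))
      (LinearMap.toContinuousLinearMap L') t := by
  classical
  let b := Module.Basis.ofVectorSpace ℝ V
  have hexp : ∀ (T : V →ₗ[ℝ] V), LinearMap.toContinuousLinearMap T
      = ∑ i, ContinuousLinearMap.smulRightL ℝ V V
          (LinearMap.toContinuousLinearMap (b.coord i)) (T (b i)) := by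
    intro T
    ext X
    have hsrl : ∀ (c : V →L[ℝ] ℝ) (f : V) (x : V),
        ContinuousLinearMap.smulRightL ℝ V V c f x = c x • f := fun _ _ _ => rfl
    simp only [LinearMap.coe_toContinuousLinearMap', ContinuousLinearMap.coe_sum',
      Finset.sum_apply, hsrl]
    conv_lhs => rw [← b.sum_repr X]
    simp [Module.Basis.coord_apply]
    conv_lhs => rw [← b.sum_repr X]
    rw [map_sum]
    simp only [map_smul]
  have hsum : HasDerivAt (fun s => ∑ i, ContinuousLinearMap.smulRightL ℝ V V
      (LinearMap.toContinuousLinearMap (b.coord i)) (L s (b i)))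
      (∑ i, ContinuousLinearMap.smulRightL ℝ V V
      (LinearMap.toContinuousLinearMap (b.coord i)) (L' (b i))) t := by
    apply HasDerivAt.fun_sum
    intro i _
    exact (ContinuousLinearMap.smulRightL ℝ V V
      (LinearMap.toContinuousLinearMap (b.coord i))).hasFDerivAt.comp_hasDerivAt t (hL (b i))
  have hfun : (fun s => LinearMap.toContinuousLinearMap (L s))
      = fun s => ∑ i, ContinuousLinearMap.smulRightL ℝ V V
          (LinearMap.toContinuousLinearMap (b.coord i)) (L s (b i)) :=
    funext fun s => hexp (L s)
  rw [hfun, hexp L']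
  exact hsum

lemma hasDerivAt_L_apply (L : ℝ → V →ₗ[ℝ] V) (L' : V →ₗ[ℝ] V) (t : ℝ)
    (hL : ∀ X : V, HasDerivAt (fun s => L s X) (L' X) t)
    (X : ℝ → V) (X' : V) (hX : HasDerivAt X X' t) :
    HasDerivAt (fun s => L s (X s)) (L' (X t) + L t X') t := by
  have h1 := (hasDerivAt_endoCLM L L' t hL).clm_apply hX
  simpa using h1

noncomputable def bilinCLM : (V →ₗ[ℝ] V →ₗ[ℝ] ℝ) →ₗ[ℝ] (V →L[ℝ] V →L[ℝ] ℝ) :=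
  (LinearMap.toContinuousLinearMap :
      (V →ₗ[ℝ] V →L[ℝ] ℝ) ≃ₗ[ℝ] (V →L[ℝ] V →L[ℝ] ℝ)).toLinearMap ∘ₗ
    (LinearMap.llcomp ℝ V (V →ₗ[ℝ] ℝ) (V →L[ℝ] ℝ)
      (LinearMap.toContinuousLinearMap : (V →ₗ[ℝ] ℝ) ≃ₗ[ℝ] (V →L[ℝ] ℝ)).toLinearMap)

lemma hasDerivAt_g_eval
    (g : ℝ → V →ₗ[ℝ] V →ₗ[ℝ] ℝ) (L : ℝ → V →ₗ[ℝ] V)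
    (hL_deriv : ∀ (t : ℝ) (X Y : V), HasDerivAt (fun s => g s X Y) (2 * g t (L t X) Y) t)
    (t : ℝ) (X Y : ℝ → V) (X' Y' : V) (hX : HasDerivAt X X' t) (hY : HasDerivAt Y Y' t) :
    HasDerivAt (fun s => g s (X s) (Y s))
      (2 * g t (L t (X t)) (Y t) + g t X' (Y t) + g t (X t) Y') t := by
  classical
  let b := Module.Basis.ofVectorSpace ℝ V
  have hΦ : ∀ (B : V →ₗ[ℝ] V →ₗ[ℝ] ℝ) (x y : V), bilinCLM B x y = B x y := fun _ _ _ => rfl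
  let D : V →ₗ[ℝ] V →ₗ[ℝ] ℝ := (2:ℝ) • ((g t).comp (L t))
  have hd : ∀ Xv Yv : V, HasDerivAt (fun s => g s Xv Yv) (D Xv Yv) t := by
    intro Xv Yv
    have : D Xv Yv = 2 * g t (L t Xv) Yv := by
      simp [D, smul_eq_mul]
    rw [this]
    exact hL_deriv t Xv Yv
  have h0 := hasDerivAt_comp_bilin (F := V →L[ℝ] V →L[ℝ] ℝ) b g D t hd bilinCLM
  have h1 := (h0.clm_apply hX).clm_apply hY
  have hfun : (fun s => bilinCLM (g s) (X s) (Y s)) = fun s => g s (X s) (Y s) := by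
    funext s; exact hΦ (g s) (X s) (Y s)
  rw [hfun] at h1
  have hval : (bilinCLM D (X t) + bilinCLM (g t) X') (Y t) + (bilinCLM (g t) (X t)) Y'
      = 2 * g t (L t (X t)) (Y t) + g t X' (Y t) + g t (X t) Y' := by
    simp only [ContinuousLinearMap.add_apply, hΦ]
    have : D (X t) (Y t) = 2 * g t (L t (X t)) (Y t) := by simp [D, smul_eq_mul]
    rw [this]
  rw [hval] at h1
  exact h1


lemma hasDerivAt_dualVector
    (g : ℝ → V →ₗ[ℝ] V →ₗ[ℝ] ℝ)
    (hg_pos : ∀ (t : ℝ) (X : V), X ≠ 0 → 0 < g t X X)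
    (L : ℝ → V →ₗ[ℝ] V)
    (hL_deriv : ∀ (t : ℝ) (X Y : V), HasDerivAt (fun s => g s X Y) (2 * g t (L t X) Y) t)
    (φ : V →ₗ[ℝ] ℝ) (H : ℝ → V) (hH : ∀ (t : ℝ) (X : V), g t (H t) X = φ X)
    (t : ℝ) : HasDerivAt H (-((2:ℝ) • L t (H t))) t := by
  classical
  let b := Module.Basis.ofVectorSpace ℝ V
  have hbij : ∀ s : ℝ, Function.Bijective (g s) := by
    intro s
    have hinj : Function.Injective (g s) := by
      intro x y hxy
      by_contra hne
      have hxy0 : g s (x - y) = 0 := by rw [map_sub, hxy, sub_self]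
      have h2 : g s (x - y) (x - y) = 0 := by rw [hxy0]; rfl
      exact absurd h2 (ne_of_gt (hg_pos s (x - y) (sub_ne_zero.mpr hne)))
    exact ⟨hinj, (LinearMap.injective_iff_surjective_of_finrank_eq_finrank
      (Subspace.dual_finrank_eq).symm).mp hinj⟩
  let e : ℝ → V ≃ₗ[ℝ] Module.Dual ℝ V := fun s => LinearEquiv.ofBijective (g s) (hbij s)
  let m : ℝ → V ≃ₗ[ℝ] V := fun s => (e s).trans (e t).symm
  let mc : ℝ → V →L[ℝ] V := fun s => LinearMap.toContinuousLinearMap ((m s) : V →ₗ[ℝ] V)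
  let u : ℝ → (V →L[ℝ] V)ˣ := fun s => ((m s).toContinuousLinearEquiv).toUnit
  have hu : ∀ s, ((u s : (V →L[ℝ] V)ˣ) : V →L[ℝ] V) = mc s := by
    intro s; ext x; rfl
  have hmH : ∀ s, mc s (H s) = H t := by
    intro s
    have h1 : g s (H s) = (φ : Module.Dual ℝ V) := LinearMap.ext (hH s)
    have h2 : e t (H t) = (φ : Module.Dual ℝ V) := LinearMap.ext (hH t)
    show (e t).symm (e s (H s)) = H t
    rw [show e s (H s) = (φ : Module.Dual ℝ V) from h1, ← h2, LinearEquiv.symm_apply_apply]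
  have hinvH : ∀ s, Ring.inverse (mc s) (H t) = H s := by
    intro s
    rw [← hu s, Ring.inverse_unit]
    have h3 : (((u s)⁻¹ : (V →L[ℝ] V)ˣ) : V →L[ℝ] V)
        (((u s : (V →L[ℝ] V)ˣ) : V →L[ℝ] V) (H s)) = H s := by
      have h4 := congrArg (fun f : V →L[ℝ] V => f (H s)) (u s).inv_mul
      simp only [ContinuousLinearMap.mul_apply, ContinuousLinearMap.one_apply] at h4
      exact h4
    rw [← hmH s, ← hu s]
    exact h3
  -- derivative of mc
  let Φ : (V →ₗ[ℝ] V →ₗ[ℝ] ℝ) →ₗ[ℝ] (V →L[ℝ] V) :=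
    (LinearMap.toContinuousLinearMap : (V →ₗ[ℝ] V) ≃ₗ[ℝ] (V →L[ℝ] V)).toLinearMap ∘ₗ
      (LinearMap.llcomp ℝ V (Module.Dual ℝ V) V ((e t).symm : Module.Dual ℝ V →ₗ[ℝ] V))
  let D : V →ₗ[ℝ] V →ₗ[ℝ] ℝ := (2:ℝ) • ((g t).comp (L t))
  have hd : ∀ Xv Yv : V, HasDerivAt (fun s => g s Xv Yv) (D Xv Yv) t := by
    intro Xv Yv
    have : D Xv Yv = 2 * g t (L t Xv) Yv := by simp [D, smul_eq_mul]
    rw [this]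
    exact hL_deriv t Xv Yv
  have h0 : HasDerivAt (fun s => Φ (g s)) (Φ D) t :=
    hasDerivAt_comp_bilin (F := V →L[ℝ] V) b g D t hd Φ
  have hfuneq : (fun s => Φ (g s)) = mc := by
    funext s; ext x; rfl
  have hΦD : Φ D = LinearMap.toContinuousLinearMap ((2:ℝ) • L t) := by
    ext x
    show (e t).symm (D x) = ((2:ℝ) • L t) x
    have h5 : D x = (2:ℝ) • (e t (L t x)) := rfl
    rw [h5, map_smul, LinearEquiv.symm_apply_apply]
    rfl
  have hmc : HasDerivAt mc (LinearMap.toContinuousLinearMap ((2:ℝ) • L t)) t := by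
    rw [← hfuneq, ← hΦD]
    exact h0
  have hut : u t = 1 := by
    apply Units.ext
    rw [hu t]
    ext x
    show (e t).symm (e t x) = x
    exact (e t).symm_apply_apply x
  have hfd : HasFDerivAt Ring.inverse
      (-(ContinuousLinearMap.mulLeftRight ℝ (V →L[ℝ] V)
        (((u t)⁻¹ : (V →L[ℝ] V)ˣ) : V →L[ℝ] V) (((u t)⁻¹ : (V →L[ℝ] V)ˣ) : V →L[ℝ] V)))
      (mc t) := by
    have h6 := hasFDerivAt_ringInverse (𝕜 := ℝ) (u t)
    rwa [hu t] at h6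
  have hinvd := hfd.comp_hasDerivAt t hmc
  have hinvd' : HasDerivAt (fun s => Ring.inverse (mc s))
      (-(LinearMap.toContinuousLinearMap ((2:ℝ) • L t))) t := by
    refine hinvd.congr_deriv ?_
    rw [hut]
    simp only [inv_one, Units.val_one, ContinuousLinearMap.neg_apply,
      ContinuousLinearMap.mulLeftRight_apply, one_mul, mul_one]
  have hfin := (ContinuousLinearMap.apply ℝ V (H t)).hasFDerivAt.comp_hasDerivAt t hinvd'
  have hfun2 : (fun s => Ring.inverse (mc s) (H t)) = H := funext hinvH
  have hfin' : HasDerivAt (fun s => Ring.inverse (mc s) (H t))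
      ((ContinuousLinearMap.apply ℝ V (H t))
        (-(LinearMap.toContinuousLinearMap ((2:ℝ) • L t)))) t := hfin
  rw [hfun2] at hfin'
  have hval : (ContinuousLinearMap.apply ℝ V (H t))
      (-(LinearMap.toContinuousLinearMap ((2:ℝ) • L t))) = -((2:ℝ) • L t (H t)) := by
    simp only [ContinuousLinearMap.apply_apply, ContinuousLinearMap.neg_apply,
      LinearMap.coe_toContinuousLinearMap', LinearMap.smul_apply]
  rwa [hval] at hfin'

end Aux

/-- Suppose additionally that the `g_t`-symmetric endomorphisms `L_t` satisfy the Riccati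
equation `L_t' = −(tr L_t)·L_t + R_t + Id` for a family of endomorphisms `R_t` (as the shape
operators of an orbit-Einstein cohomogeneity-one manifold with Einstein constant `−1` do).
Then `h''(t) = 2 g_t(L_t H_t, L_t H_t) − (tr L_t)·h'(t) − 2h(t) − g_t(R_t H_t, H_t)`. -/
theorem meanCurvature_second_derivative_riccati
    (V : Type*) [NormedAddCommGroup V] [NormedSpace ℝ V] [FiniteDimensional ℝ V]
    -- the smooth curve of inner products
    (g : ℝ → V →ₗ[ℝ] V →ₗ[ℝ] ℝ)
    (hg_symm : ∀ (t : ℝ) (X Y : V), g t X Y = g t Y X)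
    (hg_pos : ∀ (t : ℝ) (X : V), X ≠ 0 → 0 < g t X X)
    (hg_smooth : ∀ X Y : V, ContDiff ℝ (⊤ : ℕ∞) fun t => g t X Y)
    -- the `g_t`-symmetric endomorphisms `L_t` with `g_t' = 2 g_t(L_t ·, ·)`
    (L : ℝ → V →ₗ[ℝ] V)
    (hL_symm : ∀ (t : ℝ) (X Y : V), g t (L t X) Y = g t X (L t Y))
    (hL_deriv : ∀ (t : ℝ) (X Y : V),
      HasDerivAt (fun s => g s X Y) (2 * g t (L t X) Y) t)
    -- the Riccati equation: `L_t' = −(tr L_t)·L_t + R_t + Id`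
    (R : ℝ → V →ₗ[ℝ] V)
    (hRiccati : ∀ (t : ℝ) (X : V), HasDerivAt (fun s => L s X)
      (((-(LinearMap.trace ℝ V (L t))) • L t + R t + (LinearMap.id : V →ₗ[ℝ] V)) X) t)
    -- the fixed linear functional `φ` and its `g_t`-duals `H_t`
    (φ : V →ₗ[ℝ] ℝ)
    (H : ℝ → V) (hH : ∀ (t : ℝ) (X : V), g t (H t) X = φ X)
    (h : ℝ → ℝ) (hh : ∀ t : ℝ, h t = (1/2) * g t (H t) (H t)) :
    ∃ h' : ℝ → ℝ, (∀ t : ℝ, HasDerivAt h (h' t) t) ∧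
      (∀ t : ℝ, HasDerivAt h'
        (2 * g t (L t (H t)) (L t (H t)) - LinearMap.trace ℝ V (L t) * h' t
          - 2 * h t - g t (R t (H t)) (H t)) t) := by
  have key : ∀ t : ℝ, HasDerivAt H (-((2:ℝ) • L t (H t))) t := fun t =>
    hasDerivAt_dualVector g hg_pos L hL_deriv φ H hH t
  refine ⟨fun t => -(g t (L t (H t)) (H t)), ?_, ?_⟩
  · intro t
    have h1 := hasDerivAt_g_eval g L hL_deriv t H H _ _ (key t) (key t)
    have h2 : h = fun s => (1/2) * g s (H s) (H s) := funext hh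
    rw [h2]
    have h3 := h1.const_mul (1/2 : ℝ)
    refine h3.congr_deriv ?_
    have hs := hg_symm t (H t) (L t (H t))
    simp only [map_neg, map_smul, LinearMap.neg_apply, LinearMap.smul_apply, smul_eq_mul]
    rw [hs]
    ring
  · intro t
    have hLH := hasDerivAt_L_apply L
      ((-(LinearMap.trace ℝ V (L t))) • L t + R t + (LinearMap.id : V →ₗ[ℝ] V)) t
      (hRiccati t) H _ (key t)
    have h1 := (hasDerivAt_g_eval g L hL_deriv t (fun s => L s (H s)) H _ _ hLH (key t)).neg
    refine h1.congr_deriv ?_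
    rw [hh t]
    simp only [map_add, map_smul, map_neg, LinearMap.add_apply, LinearMap.smul_apply,
      LinearMap.neg_apply, LinearMap.id_apply, smul_eq_mul]
    rw [hL_symm t (L t (H t)) (H t)]
    ring
end

section
/- Let ḡ be an inner product on a finite-dimensional real vector space V, let q : ℝ → GL(V) be a differentiable curve, and set g_t(X,Y) := ḡ(q_t⁻¹X, q_t⁻¹Y). Let L_t be the unique g_t-symmetric endomorphism with (d/dt g_t)(X,Y) = 2 g_t(L_t X, Y). Then for every t, the endomorphism L_t + q_t' ∘ q_t⁻¹ is skew-symmetric with respect to g_t, i.e. g_t((L_t + q_t' q_t⁻¹)X, Y) = −g_t(X, (L_t + q_t' q_t⁻¹)Y) for all X,Y ∈ V. -/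
/-!
Write `p = q⁻¹`, so `g_t(X, Y) = ⟪p X, p Y⟫` and `p' = -p q' p`. Differentiating,
`g_t'(X, Y) = -g_t(q' p X, Y) - g_t(X, q' p Y)`, while by the symmetry of `L_t` also
`g_t'(X, Y) = 2 g_t(L_t X, Y) = g_t(L_t X, Y) + g_t(X, L_t Y)`. Subtracting the two expressions
gives the skew-symmetry of `L_t + q' p`.
-/

open scoped RealInnerProductSpace

theorem hasDerivAt_clm_of_forall_apply {𝕜 E F : Type*} [NontriviallyNormedField 𝕜]
    [CompleteSpace 𝕜] [NormedAddCommGroup E] [NormedSpace 𝕜 E] [FiniteDimensional 𝕜 E]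
    [NormedAddCommGroup F] [NormedSpace 𝕜 F] {f : 𝕜 → E →L[𝕜] F} {f' : E →L[𝕜] F} {t : 𝕜}
    (h : ∀ y, HasDerivAt (fun s => f s y) (f' y) t) : HasDerivAt f f' t := by
  let d := Module.finrank 𝕜 E
  have hd : d = Module.finrank 𝕜 (Fin d → 𝕜) := (Module.finrank_fin_fun 𝕜).symm
  let e := ((ContinuousLinearEquiv.ofFinrankEq hd).arrowCongr (1 : F ≃L[𝕜] F)).trans
    (ContinuousLinearEquiv.piRing (Fin d))
  have hcoord : HasDerivAt (fun s => e (f s)) (e f') t := hasDerivAt_pi.2 fun i => h _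
  simpa [Function.comp_def] using e.symm.hasFDerivAt.comp_hasDerivAt t hcoord

theorem HasDerivAt.units_inv {𝕜 R : Type*} [NontriviallyNormedField 𝕜] [NormedRing R]
    [HasSummableGeomSeries R] [NormedAlgebra 𝕜 R] {u : 𝕜 → Rˣ} {u' : R} {t : 𝕜}
    (h : HasDerivAt (fun s => (u s : R)) u' t) :
    HasDerivAt (fun s => (↑(u s)⁻¹ : R)) (-(↑(u t)⁻¹ * u' * ↑(u t)⁻¹)) t := by
  have := (hasFDerivAt_ringInverse (𝕜 := 𝕜) (u t)).comp_hasDerivAt t h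
  simpa [Function.comp_def] using this

theorem hasDerivAt_inverse_apply {𝕜 V : Type*} [NontriviallyNormedField 𝕜] [CompleteSpace 𝕜]
    [NormedAddCommGroup V] [NormedSpace 𝕜 V] [FiniteDimensional 𝕜 V]
    {q qinv : 𝕜 → V →ₗ[𝕜] V} {q' : V →ₗ[𝕜] V} {t : 𝕜}
    (hqinv : ∀ s, qinv s ∘ₗ q s = LinearMap.id ∧ q s ∘ₗ qinv s = LinearMap.id)
    (hq' : ∀ X, HasDerivAt (fun s => q s X) (q' X) t) (Z : V) :
    HasDerivAt (fun s => qinv s Z) (-qinv t (q' (qinv t Z))) t := by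
  have : CompleteSpace V := FiniteDimensional.complete 𝕜 V
  let u : 𝕜 → (V →L[𝕜] V)ˣ := fun s => Units.map (Module.End.toContinuousLinearMap V).toMonoidHom
    ⟨q s, qinv s, (hqinv s).2, (hqinv s).1⟩
  have hu : HasDerivAt (fun s => (u s : V →L[𝕜] V)) (Module.End.toContinuousLinearMap V q') t :=
    hasDerivAt_clm_of_forall_apply hq'
  have h := hu.units_inv.clm_apply (hasDerivAt_const t Z)
  simp only [map_zero, add_zero, neg_apply, mul_apply_eq_comp] at h
  exact h

/-- Let `ḡ` be an inner product on a finite-dimensional real vector space `V`, let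
`q : ℝ → GL(V)` be a differentiable curve, and set `g_t(X,Y) := ḡ(q_t⁻¹X, q_t⁻¹Y)`.
Let `L_t` be the unique `g_t`-symmetric endomorphism with
`(d/dt g_t)(X,Y) = 2 g_t(L_t X, Y)`. Then for every `t` the endomorphism
`L_t + q_t' ∘ q_t⁻¹` is skew-symmetric with respect to `g_t`. -/
theorem shape_operator_plus_gauge_is_skew
    (V : Type*) [NormedAddCommGroup V] [InnerProductSpace ℝ V] [FiniteDimensional ℝ V]
    -- the differentiable curve `q` in `GL(V)`, with inverses `qinv` and derivative `q'`
    (q qinv q' : ℝ → V →ₗ[ℝ] V)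
    (hqinv : ∀ t : ℝ, qinv t ∘ₗ q t = LinearMap.id ∧ q t ∘ₗ qinv t = LinearMap.id)
    (hq' : ∀ (t : ℝ) (X : V), HasDerivAt (fun s => q s X) (q' t X) t)
    -- `L_t` is `g_t`-symmetric and satisfies `g_t' = 2 g_t(L_t ·, ·)`,
    -- where `g_t(X,Y) := ⟪q_t⁻¹ X, q_t⁻¹ Y⟫`
    (L : ℝ → V →ₗ[ℝ] V)
    (hL_symm : ∀ (t : ℝ) (X Y : V),
      ⟪qinv t (L t X), qinv t Y⟫ = ⟪qinv t X, qinv t (L t Y)⟫)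
    (hL_deriv : ∀ (t : ℝ) (X Y : V),
      HasDerivAt (fun s => ⟪qinv s X, qinv s Y⟫)
        (2 * ⟪qinv t (L t X), qinv t Y⟫) t) :
    ∀ (t : ℝ) (X Y : V),
      ⟪qinv t ((L t + q' t ∘ₗ qinv t) X), qinv t Y⟫
        = -⟪qinv t X, qinv t ((L t + q' t ∘ₗ qinv t) Y)⟫ := by
  intro t X Y
  have hp := fun Z => hasDerivAt_inverse_apply hqinv (hq' t) Z
  have hmetric := (hL_deriv t X Y).unique ((hp X).inner ℝ (hp Y))
  have hsymm := hL_symm t X Y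
  simp only [inner_neg_left, inner_neg_right] at hmetric
  simp only [LinearMap.add_apply, LinearMap.comp_apply, map_add, inner_add_left, inner_add_right]
  linarith
end

section
/- Let S ∈ End(V) be self-adjoint and let Q ∈ q_Β be such that S + Q is skew-adjoint. Then tr(S ∘ (QΒ − ΒQ)) ≥ 0, with equality if and only if QΒ = ΒQ. -/
open scoped RealInnerProductSpace

/-- The operator `ad(Β) : End(V) → End(V)`, `A ↦ ΒA − AΒ`, as a linear endomorphism of
`End(V)`. -/
noncomputable def adEnd {V : Type*} [NormedAddCommGroup V] [InnerProductSpace ℝ V]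
    (B : V →ₗ[ℝ] V) : Module.End ℝ (V →ₗ[ℝ] V) :=
  LinearMap.mulLeft ℝ B - LinearMap.mulRight ℝ B

/-- A double sum of an antisymmetric function vanishes. -/
lemma sum_antisymm_eq_zero {n : ℕ} (h : Fin n → Fin n → ℝ)
    (hh : ∀ i j, h j i = - h i j) : ∑ i, ∑ j, h i j = 0 := by
  have h1 : ∑ i, ∑ j, h i j = ∑ j, ∑ i, h i j := Finset.sum_comm
  have h2 : ∑ j : Fin n, ∑ i : Fin n, h i j = -∑ i, ∑ j, h i j := by
    rw [← Finset.sum_neg_distrib]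
    refine Finset.sum_congr rfl fun j _ => ?_
    rw [← Finset.sum_neg_distrib]
    exact Finset.sum_congr rfl fun i _ => by rw [← hh j i]
  linarith [h1, h2]

/-- Let `Β ∈ End(V)` be self-adjoint, let `S ∈ End(V)` be self-adjoint and let `Q` belong to
the parabolic subalgebra `q_Β` (the sum of the eigenspaces of `ad(Β)` for nonnegative
eigenvalues) with `S + Q` skew-adjoint. Then `tr(S ∘ (QΒ − ΒQ)) ≥ 0`, with equality if and
only if `QΒ = ΒQ`. -/
theorem trace_S_bracket_Q_beta_nonneg
    (V : Type*) [NormedAddCommGroup V] [InnerProductSpace ℝ V] [FiniteDimensional ℝ V]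
    (B : V →ₗ[ℝ] V) (hB : LinearMap.adjoint B = B)
    (S : V →ₗ[ℝ] V) (hS : LinearMap.adjoint S = S)
    (Q : V →ₗ[ℝ] V)
    (hQ : Q ∈ ⨆ (c : ℝ) (_ : 0 ≤ c), Module.End.eigenspace (adEnd B) c)
    (hSQ : LinearMap.adjoint (S + Q) = -(S + Q)) :
    0 ≤ LinearMap.trace ℝ V (S ∘ₗ (Q ∘ₗ B - B ∘ₗ Q)) ∧
      (LinearMap.trace ℝ V (S ∘ₗ (Q ∘ₗ B - B ∘ₗ Q)) = 0 ↔ Q ∘ₗ B = B ∘ₗ Q) := by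
  classical
  have hB' : LinearMap.IsSymmetric B :=
    (LinearMap.isSymmetric_iff_isSelfAdjoint B).2 (LinearMap.isSelfAdjoint_iff'.2 hB)
  have hn : Module.finrank ℝ V = Module.finrank ℝ V := rfl
  set n := Module.finrank ℝ V
  let b : OrthonormalBasis (Fin n) ℝ V := hB'.eigenvectorBasis hn
  let μ : Fin n → ℝ := hB'.eigenvalues hn
  have hBb : ∀ i, B (b i) = μ i • b i := fun i => hB'.apply_eigenvectorBasis hn i
  set M : Fin n → Fin n → ℝ := fun i j => ⟪b i, Q (b j)⟫ with hM
  -- inner products against `B`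
  have hBin : ∀ (i : Fin n) (x : V), ⟪b i, B x⟫ = μ i * ⟪b i, x⟫ := by
    intro i x
    rw [← hB' (b i) x, hBb i, real_inner_smul_left]
  -- entries of `Q` vanish where `μ i < μ j`
  have hM0 : ∀ i j, μ i < μ j → M i j = 0 := by
    intro i j hij
    let φ : (V →ₗ[ℝ] V) →ₗ[ℝ] ℝ :=
      { toFun := fun A => ⟪b i, A (b j)⟫
        map_add' := fun A A' => by simp [inner_add_right]
        map_smul' := fun r A => by simp [real_inner_smul_right] }
    have hle : (⨆ (c : ℝ) (_ : 0 ≤ c), Module.End.eigenspace (adEnd B) c)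
        ≤ LinearMap.ker φ := by
      refine iSup₂_le fun c hc A hA => ?_
      rw [Module.End.mem_eigenspace_iff] at hA
      have hA' : B ∘ₗ A - A ∘ₗ B = c • A := hA
      have h1 : ⟪b i, (B ∘ₗ A - A ∘ₗ B) (b j)⟫ = c * ⟪b i, A (b j)⟫ := by
        rw [hA']; simp [real_inner_smul_right]
      have h2 : ⟪b i, (B ∘ₗ A - A ∘ₗ B) (b j)⟫ = (μ i - μ j) * ⟪b i, A (b j)⟫ := by
        simp only [LinearMap.sub_apply, LinearMap.comp_apply, inner_sub_right, hBin, hBb j,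
          map_smul, real_inner_smul_right]
        ring
      have h3 : (μ i - μ j - c) * ⟪b i, A (b j)⟫ = 0 := by
        rw [h2] at h1; linarith [h1]
      have h4 : (μ i - μ j - c) ≠ 0 := by linarith
      have h5 : ⟪b i, A (b j)⟫ = 0 := by
        rcases mul_eq_zero.1 h3 with h | h
        · exact absurd h h4
        · exact h
      simpa [φ, LinearMap.mem_ker] using h5
    have : φ Q = 0 := hle hQ
    simpa [φ, hM] using this
  -- entries of `S`
  have hQadj : LinearMap.adjoint Q = -(S + Q) - S := by
    have h := hSQ
    rw [map_add, hS] at h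
    rw [← h]; abel
  have hSM : ∀ i j, ⟪b i, S (b j)⟫ = -(M i j + M j i) / 2 := by
    intro i j
    have h1 : ⟪b i, (LinearMap.adjoint Q) (b j)⟫ = M j i := by
      rw [LinearMap.adjoint_inner_right, real_inner_comm]
    have h2 : ⟪b i, (LinearMap.adjoint Q) (b j)⟫
        = -(⟪b i, S (b j)⟫ + M i j) - ⟪b i, S (b j)⟫ := by
      rw [hQadj]
      simp [inner_sub_right, inner_add_right, hM]
    rw [h1] at h2
    linarith [h2]
  -- entries of the bracket
  have hC : ∀ i j, ⟪b i, (Q ∘ₗ B - B ∘ₗ Q) (b j)⟫ = (μ j - μ i) * M i j := by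
    intro i j
    simp only [LinearMap.sub_apply, LinearMap.comp_apply, inner_sub_right, hBin, hBb j,
      map_smul, real_inner_smul_right, hM]
    ring
  -- expansion of inner products
  have hexp : ∀ (f : V →ₗ[ℝ] V) (x : V) (i : Fin n),
      ⟪b i, f x⟫ = ∑ j, ⟪b j, x⟫ * ⟪b i, f (b j)⟫ := by
    intro f x i
    conv_lhs => rw [← b.sum_repr x]
    rw [map_sum, inner_sum]
    exact Finset.sum_congr rfl fun j _ => by
      rw [map_smul, real_inner_smul_right, OrthonormalBasis.repr_apply_apply]
  -- the trace as a double sum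
  have htr : LinearMap.trace ℝ V (S ∘ₗ (Q ∘ₗ B - B ∘ₗ Q))
      = ∑ i, ∑ j, ((μ i - μ j) * M j i) * (-(M i j + M j i) / 2) := by
    rw [LinearMap.trace_eq_matrix_trace ℝ b.toBasis, Matrix.trace]
    refine Finset.sum_congr rfl fun i _ => ?_
    rw [Matrix.diag_apply, LinearMap.toMatrix_apply, OrthonormalBasis.coe_toBasis_repr_apply,
      OrthonormalBasis.repr_apply_apply, OrthonormalBasis.coe_toBasis, LinearMap.comp_apply,
      hexp S ((Q ∘ₗ B - B ∘ₗ Q) (b i)) i]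
    exact Finset.sum_congr rfl fun j _ => by rw [hC j i, hSM i j]
  -- rewrite the trace as a sum of (essentially) squares
  have hkey : LinearMap.trace ℝ V (S ∘ₗ (Q ∘ₗ B - B ∘ₗ Q))
      = ∑ i, ∑ j, (1 / 2) * ((μ i - μ j) * M i j ^ 2) := by
    rw [htr]
    have hz := sum_antisymm_eq_zero
      (fun i j => ((μ i - μ j) * M j i) * (-(M i j + M j i) / 2)
        - (1 / 2) * ((μ i - μ j) * M i j ^ 2)) (fun i j => by ring)
    simp only [Finset.sum_sub_distrib] at hz
    linarith [hz]
  -- each term is nonnegative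
  have hterm : ∀ i j, 0 ≤ (1 / 2 : ℝ) * ((μ i - μ j) * M i j ^ 2) := by
    intro i j
    rcases le_or_gt (μ j) (μ i) with h | h
    · exact mul_nonneg (by norm_num) (mul_nonneg (by linarith) (sq_nonneg _))
    · rw [hM0 i j h]; ring_nf; exact le_refl 0
  have hnonneg : 0 ≤ LinearMap.trace ℝ V (S ∘ₗ (Q ∘ₗ B - B ∘ₗ Q)) := by
    rw [hkey]
    exact Finset.sum_nonneg fun i _ => Finset.sum_nonneg fun j _ => hterm i j
  refine ⟨hnonneg, ?_, ?_⟩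
  · -- trace zero → commute
    intro h0
    rw [hkey] at h0
    have hall : ∀ i ∈ Finset.univ, ∀ j ∈ Finset.univ,
        (1 / 2 : ℝ) * ((μ i - μ j) * M i j ^ 2) = 0 := by
      intro i _ j hj
      have h1 := (Finset.sum_eq_zero_iff_of_nonneg
        (fun i _ => Finset.sum_nonneg fun j _ => hterm i j)).1 h0 i (Finset.mem_univ i)
      exact (Finset.sum_eq_zero_iff_of_nonneg (fun j _ => hterm i j)).1 h1 j hj
    have hMc : ∀ i j, (μ i - μ j) * M i j = 0 := by
      intro i j
      have := hall i (Finset.mem_univ i) j (Finset.mem_univ j)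
      have h2 : (μ i - μ j) * M i j ^ 2 = 0 := by linarith
      rcases mul_eq_zero.1 h2 with h | h
      · rw [h, zero_mul]
      · rw [pow_eq_zero_iff (two_ne_zero)] at h
        rw [h, mul_zero]
    -- conclude equality of linear maps
    refine Module.Basis.ext b.toBasis fun j => ?_
    rw [OrthonormalBasis.coe_toBasis]
    have hx : ∀ i : Fin n, ⟪b i, (Q ∘ₗ B) (b j)⟫ = ⟪b i, (B ∘ₗ Q) (b j)⟫ := by
      intro i
      have h1 : ⟪b i, (Q ∘ₗ B) (b j)⟫ = μ j * M i j := by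
        simp only [LinearMap.comp_apply, hBb j, map_smul, real_inner_smul_right, hM]
      have h2 : ⟪b i, (B ∘ₗ Q) (b j)⟫ = μ i * M i j := by
        simp only [LinearMap.comp_apply, hBin, hM]
      rw [h1, h2]
      have := hMc i j
      nlinarith [this]
    have := hx
    rw [← b.sum_repr ((Q ∘ₗ B) (b j)), ← b.sum_repr ((B ∘ₗ Q) (b j))]
    refine Finset.sum_congr rfl fun i _ => ?_
    rw [OrthonormalBasis.repr_apply_apply, OrthonormalBasis.repr_apply_apply, hx i]
  · -- commute → trace zero
    intro h
    rw [h, sub_self, LinearMap.comp_zero, map_zero]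
end

section
/- If k ∈ End(V) is orthogonal (k* k = Id_V) and satisfies k(V_{≥λ}) ⊆ V_{≥λ} for every λ ∈ ℝ, then k commutes with Β: kΒ = Βk. (This expresses the identity O(V) ∩ Q_Β = K_Β for the parabolic subgroup Q_Β associated with Β, where K_Β is the group of orthogonal maps commuting with Β.) -/
/-!
An orthogonal `k` preserving the subspaces `V_{≥λ}` also preserves `V_{>λ} = ⨆_{μ>λ} V_{≥μ}`
and hence, since `k⁻¹ = k*`, its orthogonal complement. As the eigenspaces of `Β` are mutually
orthogonal and `V_{≥λ} = E_λ ⊕ V_{>λ}`, the modular law gives `E_λ = V_{≥λ} ⊓ V_{>λ}ᗮ`, so `k`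
preserves every eigenspace `E_λ` of `Β`. Since these span `V`, `k` commutes with `Β`.
-/

/-- For a self-adjoint `Β ∈ End(V)` and `λ ∈ ℝ`, the subspace `V_{≥λ}`: the sum of the
eigenspaces of `Β` with eigenvalue `≥ λ`. -/
noncomputable def sumEigenspacesGE {V : Type*} [NormedAddCommGroup V]
    [InnerProductSpace ℝ V] (B : V →ₗ[ℝ] V) (lam : ℝ) : Submodule ℝ V :=
  ⨆ (mu : ℝ) (_ : lam ≤ mu), Module.End.eigenspace B mu

open Module End Submodule

namespace Module.End

section Semiring

variable {R M : Type*} [Semiring R] [AddCommMonoid M] [Module R M]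

theorem iSup_mem_invtSubmodule {f : End R M} {ι : Sort*} {p : ι → Submodule R M}
    (hp : ∀ i, p i ∈ invtSubmodule f) : (⨆ i, p i) ∈ invtSubmodule f :=
  iSup_le fun i => (hp i).trans (comap_mono (le_iSup p i))

end Semiring

section DivisionRing

variable {K M : Type*} [DivisionRing K] [AddCommGroup M] [Module K M] [FiniteDimensional K M]

theorem map_eq_of_mem_invtSubmodule {f : End K M} (hf : Function.Injective f)
    {p : Submodule K M} (hp : p ∈ invtSubmodule f) : p.map f = p :=
  eq_of_le_of_finrank_eq ((mem_invtSubmodule_iff_map_le f).mp hp)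
    (equivMapOfInjective f hf p).finrank_eq.symm

theorem mem_invtSubmodule_of_comp_eq_id {f g : End K M} (hgf : g ∘ₗ f = LinearMap.id)
    {p : Submodule K M} (hp : p ∈ invtSubmodule f) : p ∈ invtSubmodule g := by
  rw [mem_invtSubmodule_iff_forall_mem_of_mem]
  intro x hx
  rw [← map_eq_of_mem_invtSubmodule (LinearMap.injective_of_comp_eq_id f g hgf) hp] at hx
  obtain ⟨y, hy, rfl⟩ := hx
  rwa [← LinearMap.comp_apply, hgf, LinearMap.id_apply]

end DivisionRing

theorem comp_eq_comp_of_forall_eigenspace_mem_invtSubmodule {R M : Type*} [CommRing R]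
    [AddCommGroup M] [Module R M] {f g : End R M} (hf : ⨆ μ, eigenspace f μ = ⊤)
    (hg : ∀ μ, eigenspace f μ ∈ invtSubmodule g) : g ∘ₗ f = f ∘ₗ g := by
  ext x
  refine iSup_induction _ (motive := fun x => g (f x) = f (g x)) (hf ▸ mem_top) ?_ ?_ ?_
  · intro μ y hy
    rw [mem_eigenspace_iff.mp hy, map_smul, mem_eigenspace_iff.mp (hg μ hy)]
  · simp only [map_zero]
  · intro y z hy hz
    simp only [map_add, hy, hz]

end Module.End

namespace LinearMap

variable {𝕜 E : Type*} [RCLike 𝕜] [NormedAddCommGroup E] [InnerProductSpace 𝕜 E]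
  [FiniteDimensional 𝕜 E]

theorem IsSymmetric.iSup_eigenspace_eq_top {T : E →ₗ[𝕜] E} (hT : T.IsSymmetric) :
    ⨆ μ, eigenspace T μ = ⊤ :=
  orthogonal_eq_bot_iff.mp hT.orthogonalComplement_iSup_eigenspaces_eq_bot

theorem orthogonal_mem_invtSubmodule_of_adjoint_comp_self {T : E →ₗ[𝕜] E}
    (hT : T.adjoint ∘ₗ T = LinearMap.id) {U : Submodule 𝕜 E} (hU : U ∈ invtSubmodule T) :
    Uᗮ ∈ invtSubmodule T :=
  mem_invtSubmodule_adjoint_iff.mp (mem_invtSubmodule_of_comp_eq_id hT hU)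

end LinearMap

section Filtration

variable {V : Type*} [NormedAddCommGroup V] [InnerProductSpace ℝ V] (B : V →ₗ[ℝ] V)

noncomputable def sumEigenspacesGT (lam : ℝ) : Submodule ℝ V :=
  ⨆ (mu : ℝ) (_ : lam < mu), eigenspace B mu

theorem sumEigenspacesGE_eq_eigenspace_sup_sumEigenspacesGT (lam : ℝ) :
    sumEigenspacesGE B lam = eigenspace B lam ⊔ sumEigenspacesGT B lam := by
  refine le_antisymm (iSup₂_le fun mu hmu => ?_) (sup_le ?_ ?_)
  · rcases hmu.eq_or_lt with rfl | hlt
    · exact le_sup_left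
    · exact le_sup_of_le_right (le_iSup₂_of_le mu hlt le_rfl)
  · exact le_iSup₂_of_le lam le_rfl le_rfl
  · exact iSup₂_le fun mu hmu => le_iSup₂_of_le mu hmu.le le_rfl

theorem sumEigenspacesGT_eq_iSup_sumEigenspacesGE (lam : ℝ) :
    sumEigenspacesGT B lam = ⨆ (mu : ℝ) (_ : lam < mu), sumEigenspacesGE B mu := by
  refine le_antisymm (iSup₂_mono fun mu _ => le_iSup₂_of_le mu le_rfl le_rfl) ?_
  exact iSup₂_le fun mu hmu => iSup₂_le fun nu hnu => le_iSup₂_of_le nu (hmu.trans_le hnu) le_rfl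

variable {B}

theorem LinearMap.IsSymmetric.eigenspace_le_orthogonal_sumEigenspacesGT (hB : B.IsSymmetric)
    (lam : ℝ) : eigenspace B lam ≤ (sumEigenspacesGT B lam)ᗮ := by
  simp only [← isOrtho_iff_le, sumEigenspacesGT, isOrtho_iSup_right]
  exact fun mu hmu => hB.orthogonalFamily_eigenspaces.isOrtho hmu.ne

theorem LinearMap.IsSymmetric.eigenspace_eq_sumEigenspacesGE_inf_orthogonal (hB : B.IsSymmetric)
    (lam : ℝ) : eigenspace B lam = sumEigenspacesGE B lam ⊓ (sumEigenspacesGT B lam)ᗮ := by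
  rw [sumEigenspacesGE_eq_eigenspace_sup_sumEigenspacesGT,
    sup_inf_assoc_of_le _ (hB.eigenspace_le_orthogonal_sumEigenspacesGT lam),
    inf_orthogonal_eq_bot, sup_bot_eq]

end Filtration

/-- If `k ∈ End(V)` is orthogonal (`k* k = Id`) and satisfies `k(V_{≥λ}) ⊆ V_{≥λ}` for every
`λ ∈ ℝ`, then `k` commutes with the self-adjoint endomorphism `Β`. (This expresses the
identity `O(V) ∩ Q_Β = K_Β` for the parabolic subgroup `Q_Β` associated with `Β`.) -/
theorem orthogonal_inter_parabolic_commutes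
    (V : Type*) [NormedAddCommGroup V] [InnerProductSpace ℝ V] [FiniteDimensional ℝ V]
    (B : V →ₗ[ℝ] V) (hB : LinearMap.adjoint B = B)
    (k : V →ₗ[ℝ] V) (hk : LinearMap.adjoint k ∘ₗ k = LinearMap.id)
    (hpres : ∀ (lam : ℝ) (x : V), x ∈ sumEigenspacesGE B lam →
      k x ∈ sumEigenspacesGE B lam) :
    k ∘ₗ B = B ∘ₗ k := by
  have hBsym : B.IsSymmetric :=
    (LinearMap.isSymmetric_iff_isSelfAdjoint B).mpr (LinearMap.isSelfAdjoint_iff'.mpr hB)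
  have hGE : ∀ lam, sumEigenspacesGE B lam ∈ invtSubmodule k := hpres
  have hGT : ∀ lam, sumEigenspacesGT B lam ∈ invtSubmodule k := fun lam => by
    rw [sumEigenspacesGT_eq_iSup_sumEigenspacesGE]
    exact iSup_mem_invtSubmodule fun mu => iSup_mem_invtSubmodule fun _ => hGE mu
  refine comp_eq_comp_of_forall_eigenspace_mem_invtSubmodule hBsym.iSup_eigenspace_eq_top
    fun lam => ?_
  rw [hBsym.eigenspace_eq_sumEigenspacesGE_inf_orthogonal]
  exact invtSubmodule.inf_mem (hGE lam)
    (LinearMap.orthogonal_mem_invtSubmodule_of_adjoint_comp_self hk (hGT lam))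
end
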